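/- For each primitive cube root of unity ζ, the sextic polynomial g_ζ = z₀⁵z₁ + ζ·z₂⁵z₀ + ζ²·z₁⁵z₂ satisfies: (i) the only common zero in ℂ³ of its three partial derivatives ∂g_ζ/∂z₀, ∂g_ζ/∂z₁, ∂g_ζ/∂z₂ is the origin (so the plane projective curve {g_ζ = 0} is smooth), and (ii) g_ζ(1, ω, ω²) = 0 for every cube root of unity ω, i.e. the curve {g_ζ = 0} contains all three fixed points of the cyclic projective transformation [z₀:z₁:z₂] ↦ [z₂:z₀:z₁]. -/

import Mathlib

/-!
Multiplying the three critical equations `5x⁴y = -ζz⁵`, `5ζ²y⁴z = -x⁵`, `5ζz⁴x = -ζ²y⁵`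
gives `125ζ³(xyz)⁵ = -ζ³(xyz)⁵`, so one coordinate vanishes; the equations then force
`x = 0 → z = 0 → y = 0 → x = 0` cyclically. At `(1, ω, ω²)` with `ω³ = 1` all three monomials
equal `ω`, so `g_ζ` takes the value `ω(1 + ζ + ζ²) = 0`.
-/

open MvPolynomial

noncomputable def gSextic (ζ : ℂ) : MvPolynomial (Fin 3) ℂ :=
  X 0 ^ 5 * X 1 + C ζ * (X 2 ^ 5 * X 0) + C (ζ ^ 2) * (X 1 ^ 5 * X 2)

section CriticalPoints

variable {K : Type*} [Field K] {ζ x y z : K}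

theorem mul_mul_eq_zero_of_critical [CharZero K] (hζ : ζ ≠ 0)
    (h₀ : 5 * x ^ 4 * y + ζ * z ^ 5 = 0) (h₁ : x ^ 5 + 5 * ζ ^ 2 * y ^ 4 * z = 0)
    (h₂ : 5 * ζ * z ^ 4 * x + ζ ^ 2 * y ^ 5 = 0) : x * y * z = 0 := by
  have h : (126 * ζ ^ 3) * (x * y * z) ^ 5 = 0 := by
    linear_combination (5 * ζ ^ 2 * y ^ 4 * z) * (5 * ζ * z ^ 4 * x) * h₀
      - ζ * z ^ 5 * (5 * ζ * z ^ 4 * x) * h₁ + ζ * z ^ 5 * x ^ 5 * h₂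
  have h126 : (126 * ζ ^ 3 : K) ≠ 0 := mul_ne_zero (by norm_num) (pow_ne_zero 3 hζ)
  exact pow_eq_zero_iff (n := 5) (by norm_num) |>.mp ((mul_eq_zero.mp h).resolve_left h126)

theorem eq_zero_of_critical [CharZero K] (hζ : ζ ≠ 0)
    (h₀ : 5 * x ^ 4 * y + ζ * z ^ 5 = 0) (h₁ : x ^ 5 + 5 * ζ ^ 2 * y ^ 4 * z = 0)
    (h₂ : 5 * ζ * z ^ 4 * x + ζ ^ 2 * y ^ 5 = 0) : x = 0 ∧ y = 0 ∧ z = 0 := by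
  have hxz : x = 0 → z = 0 := fun hx => by simpa [hx, hζ] using h₀
  have hzy : z = 0 → y = 0 := fun hz => by simpa [hz, hζ] using h₂
  have hyx : y = 0 → x = 0 := fun hy => by simpa [hy] using h₁
  rcases mul_eq_zero.mp (mul_mul_eq_zero_of_critical hζ h₀ h₁ h₂) with hxy | hz
  · rcases mul_eq_zero.mp hxy with hx | hy
    · exact ⟨hx, hzy (hxz hx), hxz hx⟩
    · exact ⟨hyx hy, hy, hxz (hyx hy)⟩
  · exact ⟨hyx (hzy hz), hzy hz, hz⟩

end CriticalPoints

section Sextic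

variable (ζ : ℂ) (v : Fin 3 → ℂ)

theorem eval_pderiv_zero_gSextic :
    eval v (pderiv 0 (gSextic ζ)) = 5 * v 0 ^ 4 * v 1 + ζ * v 2 ^ 5 := by
  simp [gSextic]
  ring

theorem eval_pderiv_one_gSextic :
    eval v (pderiv 1 (gSextic ζ)) = v 0 ^ 5 + 5 * ζ ^ 2 * v 1 ^ 4 * v 2 := by
  simp [gSextic]
  ring

theorem eval_pderiv_two_gSextic :
    eval v (pderiv 2 (gSextic ζ)) = 5 * ζ * v 2 ^ 4 * v 0 + ζ ^ 2 * v 1 ^ 5 := by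
  simp [gSextic]
  ring

theorem eval_gSextic_cube_root {ζ ω : ℂ} (hζ : IsPrimitiveRoot ζ 3) (hω : ω ^ 3 = 1) :
    eval ![1, ω, ω ^ 2] (gSextic ζ) = 0 := by
  have hsum : 1 + ζ + ζ ^ 2 = 0 := by
    simpa [Finset.sum_range_succ] using hζ.geom_sum_eq_zero (by norm_num)
  simp [gSextic]
  linear_combination ω * hsum + (ζ * ω * (ω ^ 6 + ω ^ 3 + 1) + ζ ^ 2 * ω * (ω ^ 3 + 1)) * hω

end Sextic

/-- For every primitive cube root of unity ζ:
(i) the only common zero in ℂ³ of the three partial derivatives of `g_ζ` is the origin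
(so the plane projective curve `{g_ζ = 0}` is smooth), and
(ii) `g_ζ(1, ω, ω²) = 0` for every cube root of unity ω, i.e. the curve contains all three
fixed points of the cyclic projective transformation `[z₀:z₁:z₂] ↦ [z₂:z₀:z₁]`. -/
theorem gSextic_smooth_and_contains_tau_fixed_points (ζ : ℂ) (hζ : IsPrimitiveRoot ζ 3) :
    (∀ v : Fin 3 → ℂ, (∀ i : Fin 3, eval v (pderiv i (gSextic ζ)) = 0) → v = 0) ∧
    (∀ ω : ℂ, ω ^ 3 = 1 → eval ![1, ω, ω ^ 2] (gSextic ζ) = 0) := by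
  refine ⟨fun v hv => ?_, fun ω hω => eval_gSextic_cube_root hζ hω⟩
  obtain ⟨h₀, h₁, h₂⟩ := eq_zero_of_critical (hζ.ne_zero (by norm_num))
    (eval_pderiv_zero_gSextic ζ v ▸ hv 0) (eval_pderiv_one_gSextic ζ v ▸ hv 1)
    (eval_pderiv_two_gSextic ζ v ▸ hv 2)
  ext i
  fin_cases i <;> assumption
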